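/- The quotient A = R[X,Y]/(F, F_X, F_Y) is, as a K-algebra, isomorphic to the polynomial ring over K in the n − 1 variables {A_{νμ} : (ν,μ) ∈ I, (ν,μ) ∉ {(0,0),(1,0),(0,1)}} ∪ {X, Y}; in particular A is an integral domain. -/

import Mathlib

open MvPolynomial

set_option synthInstance.maxHeartbeats 1000000
set_option maxHeartbeats 1000000

def idxSet (p q : ℕ) : Finset (ℕ × ℕ) :=
  (Finset.range q ×ˢ Finset.range p).filter fun t => t.1 * p + t.2 * q < p * q

/-- `R = K[{A_νμ}]`, the polynomial ring in the indeterminates `A_νμ`, `(ν,μ) ∈ I`. -/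
abbrev coefRing (K : Type) [Field K] (p q : ℕ) := MvPolynomial ↥(idxSet p q) K

/-- `R[X,Y]`, with `X 0 = X` and `X 1 = Y`. -/
abbrev genRing (K : Type) [Field K] (p q : ℕ) := MvPolynomial (Fin 2) (coefRing K p q)

/-- The generic normed Weierstraß polynomial
`F = Y^p − X^q + Σ_{(ν,μ) ∈ I} A_νμ X^ν Y^μ ∈ R[X,Y]` of type `p,q`. -/
noncomputable def genF (K : Type) [Field K] (p q : ℕ) : genRing K p q :=
  X 1 ^ p - X 0 ^ q +
    ∑ i : idxSet p q, C (MvPolynomial.X i) * X 0 ^ (i : ℕ × ℕ).1 * X 1 ^ (i : ℕ × ℕ).2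

namespace WAux

variable (K : Type) [Field K] (p q : ℕ)

abbrev Sig (p q : ℕ) := ↥(idxSet p q)
abbrev P (K : Type) [Field K] (p q : ℕ) := MvPolynomial (Sig p q ⊕ Fin 2) K

lemma mem_idx {p q : ℕ} (hp : 1 < p) (hpq : p < q) {ν μ : ℕ}
    (h1 : ν < q) (h2 : μ < p) (h3 : ν * p + μ * q < p * q) : (ν, μ) ∈ idxSet p q := by
  simp [idxSet, h1, h2, h3]

variable {p q} (hp : 1 < p) (hpq : p < q)

def ia : Sig p q := ⟨(0,0), mem_idx hp hpq (by omega) (by omega) (by nlinarith)⟩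
def ib : Sig p q := ⟨(1,0), mem_idx hp hpq (by omega) (by omega) (by nlinarith)⟩
def ic : Sig p q := ⟨(0,1), mem_idx hp hpq (by omega) (by omega) (by nlinarith)⟩

lemma ia_ne_ib : ia hp hpq ≠ ib hp hpq := by simp [ia, ib, Subtype.ext_iff, Prod.ext_iff]
lemma ia_ne_ic : ia hp hpq ≠ ic hp hpq := by simp [ia, ic, Subtype.ext_iff, Prod.ext_iff]
lemma ib_ne_ic : ib hp hpq ≠ ic hp hpq := by simp [ib, ic, Subtype.ext_iff, Prod.ext_iff]

/-- the special predicate -/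
def spl (i : Sig p q) : Prop := (i : ℕ × ℕ) ∈ ({(0,0), (1,0), (0,1)} : Set (ℕ × ℕ))

instance : DecidablePred (spl (p := p) (q := q)) := fun i => by
  unfold spl; rw [Set.mem_insert_iff, Set.mem_insert_iff, Set.mem_singleton_iff]; infer_instance

lemma spl_iff (i : Sig p q) : spl i ↔ i = ia hp hpq ∨ i = ib hp hpq ∨ i = ic hp hpq := by
  simp [spl, ia, ib, ic, Subtype.ext_iff, Set.mem_insert_iff]

/-- the non-special indices -/
def Rest : Finset (Sig p q) := Finset.univ.filter fun i => ¬ spl i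

lemma mem_Rest {i : Sig p q} : i ∈ Rest (p := p) (q := q) ↔ ¬ spl i := by
  simp [Rest]

end WAux

namespace WAux
variable {K : Type} [Field K] {p q : ℕ} (hp : 1 < p) (hpq : p < q)

lemma sum_split {M : Type*} [AddCommMonoid M] (f : Sig p q → M) :
    ∑ i : Sig p q, f i
      = f (ia hp hpq) + f (ib hp hpq) + f (ic hp hpq) + ∑ i ∈ Rest, f i := by
  classical
  rw [← Finset.sum_filter_add_sum_filter_not Finset.univ (fun i => spl i) f]
  have h1 : Finset.univ.filter (fun i => spl i)
      = {ia hp hpq, ib hp hpq, ic hp hpq} := by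
    ext i
    simp [spl_iff hp hpq, Finset.mem_insert]
  rw [h1]
  rw [Finset.sum_insert (by simp [ia_ne_ib hp hpq, ia_ne_ic hp hpq]),
    Finset.sum_insert (by simp [ib_ne_ic hp hpq]), Finset.sum_singleton]
  unfold Rest
  abel

end WAux

namespace WAux
variable {K : Type} [Field K] {p q : ℕ} (hp : 1 < p) (hpq : p < q)

open Sum (inl inr)

noncomputable def G : P K p q :=
  X (inr 1) ^ p - X (inr 0) ^ q +
    ∑ i ∈ Rest, X (inl i) * X (inr 0) ^ (i : ℕ × ℕ).1 * X (inr 1) ^ (i : ℕ × ℕ).2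

noncomputable def Gx : P K p q :=
  -((q : P K p q) * X (inr 0) ^ (q - 1)) +
    ∑ i ∈ Rest, ((i : ℕ × ℕ).1 : P K p q) *
      (X (inl i) * X (inr 0) ^ ((i : ℕ × ℕ).1 - 1) * X (inr 1) ^ (i : ℕ × ℕ).2)

noncomputable def Gy : P K p q :=
  (p : P K p q) * X (inr 1) ^ (p - 1) +
    ∑ i ∈ Rest, ((i : ℕ × ℕ).2 : P K p q) *
      (X (inl i) * X (inr 0) ^ (i : ℕ × ℕ).1 * X (inr 1) ^ ((i : ℕ × ℕ).2 - 1))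

noncomputable def F' : P K p q :=
  X (inl (ia hp hpq)) + X (inl (ib hp hpq)) * X (inr 0) + X (inl (ic hp hpq)) * X (inr 1) + G

noncomputable def Dx' : P K p q := X (inl (ib hp hpq)) + Gx

noncomputable def Dy' : P K p q := X (inl (ic hp hpq)) + Gy

noncomputable def eps : P K p q ≃ₐ[K] genRing K p q :=
  (renameEquiv K (Equiv.sumComm (Sig p q) (Fin 2))).trans (sumAlgEquiv K (Fin 2) (Sig p q))

@[simp] lemma eps_X_inl (i : Sig p q) :
    (eps (K := K) (X (inl i))) = C (MvPolynomial.X i) := by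
  simp [eps, sumAlgEquiv_X_inl, sumAlgEquiv_X_inr]

@[simp] lemma eps_X_inr (j : Fin 2) :
    (eps (K := K) (X (inr j) : P K p q)) = X j := by
  simp [eps, sumAlgEquiv_X_inl, sumAlgEquiv_X_inr]

lemma eps_F : eps (F' (K := K) hp hpq) = genF K p q := by
  rw [genF, sum_split hp hpq]
  simp only [F', G, map_add, map_sub, map_mul, map_pow, map_sum, eps_X_inl, eps_X_inr,
    ia, ib, ic, pow_zero, pow_one, mul_one]
  ring

lemma pd0_eq : pderiv 0 (genF K p q) =
    C (MvPolynomial.X (ib hp hpq)) +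
      (-((q : genRing K p q) * X 0 ^ (q - 1)) +
        ∑ i ∈ Rest, ((i : ℕ × ℕ).1 : genRing K p q) *
          (C (MvPolynomial.X i) * X 0 ^ ((i : ℕ × ℕ).1 - 1) * X 1 ^ (i : ℕ × ℕ).2)) := by
  have h : ∀ i : Sig p q,
      pderiv 0 (C (MvPolynomial.X i) * X 0 ^ (i : ℕ × ℕ).1 * X 1 ^ (i : ℕ × ℕ).2
          : genRing K p q)
        = ((i : ℕ × ℕ).1 : genRing K p q) *
            (C (MvPolynomial.X i) * X 0 ^ ((i : ℕ × ℕ).1 - 1) * X 1 ^ (i : ℕ × ℕ).2) := by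
    intro i
    simp only [pderiv_mul, pderiv_pow, pderiv_C, pderiv_X_self,
      pderiv_X_of_ne (show (1 : Fin 2) ≠ 0 by decide)]
    ring
  rw [genF, map_add, map_sub, map_sum]
  simp only [h]
  rw [sum_split hp hpq]
  simp only [ia, ib, ic, pderiv_pow, pderiv_X_self, pderiv_C,
    pderiv_X_of_ne (show (1 : Fin 2) ≠ 0 by decide),
    Nat.cast_zero, Nat.cast_one, zero_mul, one_mul, pow_zero, mul_one, mul_zero]
  ring

lemma pd1_eq : pderiv 1 (genF K p q) =
    C (MvPolynomial.X (ic hp hpq)) +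
      ((p : genRing K p q) * X 1 ^ (p - 1) +
        ∑ i ∈ Rest, ((i : ℕ × ℕ).2 : genRing K p q) *
          (C (MvPolynomial.X i) * X 0 ^ (i : ℕ × ℕ).1 * X 1 ^ ((i : ℕ × ℕ).2 - 1))) := by
  have h : ∀ i : Sig p q,
      pderiv 1 (C (MvPolynomial.X i) * X 0 ^ (i : ℕ × ℕ).1 * X 1 ^ (i : ℕ × ℕ).2
          : genRing K p q)
        = ((i : ℕ × ℕ).2 : genRing K p q) *
            (C (MvPolynomial.X i) * X 0 ^ (i : ℕ × ℕ).1 * X 1 ^ ((i : ℕ × ℕ).2 - 1)) := by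
    intro i
    simp only [pderiv_mul, pderiv_pow, pderiv_C, pderiv_X_self,
      pderiv_X_of_ne (show (0 : Fin 2) ≠ 1 by decide)]
    ring
  rw [genF, map_add, map_sub, map_sum]
  simp only [h]
  rw [sum_split hp hpq]
  simp only [ia, ib, ic, pderiv_pow, pderiv_X_self, pderiv_C,
    pderiv_X_of_ne (show (0 : Fin 2) ≠ 1 by decide),
    Nat.cast_zero, Nat.cast_one, zero_mul, one_mul, pow_zero, mul_one, mul_zero]
  ring

lemma eps_Dx : eps (Dx' (K := K) hp hpq) = pderiv 0 (genF K p q) := by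
  rw [pd0_eq hp hpq]
  simp only [Dx', Gx, map_add, map_neg, map_mul, map_sum, map_pow, map_natCast,
    eps_X_inl, eps_X_inr]

lemma eps_Dy : eps (Dy' (K := K) hp hpq) = pderiv 1 (genF K p q) := by
  rw [pd1_eq hp hpq]
  simp only [Dy', Gy, map_add, map_neg, map_mul, map_sum, map_pow, map_natCast,
    eps_X_inl, eps_X_inr]

end WAux

namespace WAux
variable {K : Type} [Field K] {p q : ℕ} (hp : 1 < p) (hpq : p < q)
open Sum (inl inr)

section Invariance
variable (u : Sig p q ⊕ Fin 2 → P K p q)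

lemma aeval_G (hr : ∀ j, u (inr j) = X (inr j))
    (hl : ∀ i ∈ Rest (p := p) (q := q), u (inl i) = X (inl i)) : aeval u (G : P K p q) = G := by
  unfold G
  simp only [map_add, map_sub, map_pow, map_sum, map_mul, aeval_X, hr]
  congr 1
  exact Finset.sum_congr rfl fun i hi => by rw [hl i hi]

lemma aeval_Gx (hr : ∀ j, u (inr j) = X (inr j))
    (hl : ∀ i ∈ Rest (p := p) (q := q), u (inl i) = X (inl i)) : aeval u (Gx : P K p q) = Gx := by
  unfold Gx
  simp only [map_add, map_neg, map_sub, map_pow, map_sum, map_mul, aeval_X, map_natCast, hr]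
  congr 1
  exact Finset.sum_congr rfl fun i hi => by rw [hl i hi]

lemma aeval_Gy (hr : ∀ j, u (inr j) = X (inr j))
    (hl : ∀ i ∈ Rest (p := p) (q := q), u (inl i) = X (inl i)) : aeval u (Gy : P K p q) = Gy := by
  unfold Gy
  simp only [map_add, map_neg, map_sub, map_pow, map_sum, map_mul, aeval_X, map_natCast, hr]
  congr 1
  exact Finset.sum_congr rfl fun i hi => by rw [hl i hi]

end Invariance

lemma not_spl_of_mem_Rest {i : Sig p q} (hi : i ∈ Rest (p := p) (q := q)) :
    i ≠ ia hp hpq ∧ i ≠ ib hp hpq ∧ i ≠ ic hp hpq := by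
  have := (mem_Rest).mp hi
  rw [spl_iff hp hpq] at this
  push_neg at this
  exact this

noncomputable def fmap : Sig p q ⊕ Fin 2 → P K p q
  | inl i =>
      if i = ia hp hpq then F' hp hpq
      else if i = ib hp hpq then Dx' hp hpq
      else if i = ic hp hpq then Dy' hp hpq
      else X (inl i)
  | inr j => X (inr j)

noncomputable def gmap : Sig p q ⊕ Fin 2 → P K p q
  | inl i =>
      if i = ia hp hpq then
        X (inl (ia hp hpq)) -
          ((X (inl (ib hp hpq)) - Gx) * X (inr 0) + (X (inl (ic hp hpq)) - Gy) * X (inr 1) + G)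
      else if i = ib hp hpq then X (inl (ib hp hpq)) - Gx
      else if i = ic hp hpq then X (inl (ic hp hpq)) - Gy
      else X (inl i)
  | inr j => X (inr j)

lemma fmap_rest : ∀ i ∈ Rest (p := p) (q := q), fmap (K := K) hp hpq (inl i) = X (inl i) := by
  intro i hi
  obtain ⟨h1, h2, h3⟩ := not_spl_of_mem_Rest hp hpq hi
  simp [fmap, h1, h2, h3]

lemma gmap_rest : ∀ i ∈ Rest (p := p) (q := q), gmap (K := K) hp hpq (inl i) = X (inl i) := by
  intro i hi
  obtain ⟨h1, h2, h3⟩ := not_spl_of_mem_Rest hp hpq hi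
  simp [gmap, h1, h2, h3]

lemma fmap_inr : ∀ j, fmap (K := K) (p := p) (q := q) hp hpq (inr j) = X (inr j) := fun _ => rfl
lemma gmap_inr : ∀ j, gmap (K := K) (p := p) (q := q) hp hpq (inr j) = X (inr j) := fun _ => rfl

lemma fmap_a : fmap (K := K) hp hpq (inl (ia hp hpq)) = F' hp hpq := by simp [fmap]
lemma fmap_b : fmap (K := K) hp hpq (inl (ib hp hpq)) = Dx' hp hpq := by
  simp [fmap, (ia_ne_ib hp hpq).symm]
lemma fmap_c : fmap (K := K) hp hpq (inl (ic hp hpq)) = Dy' hp hpq := by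
  simp [fmap, (ia_ne_ic hp hpq).symm, (ib_ne_ic hp hpq).symm]

lemma gmap_a : gmap (K := K) hp hpq (inl (ia hp hpq)) =
    X (inl (ia hp hpq)) -
      ((X (inl (ib hp hpq)) - Gx) * X (inr 0) + (X (inl (ic hp hpq)) - Gy) * X (inr 1) + G) := by
  simp [gmap]
lemma gmap_b : gmap (K := K) hp hpq (inl (ib hp hpq)) = X (inl (ib hp hpq)) - Gx := by
  simp [gmap, (ia_ne_ib hp hpq).symm]
lemma gmap_c : gmap (K := K) hp hpq (inl (ic hp hpq)) = X (inl (ic hp hpq)) - Gy := by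
  simp [gmap, (ia_ne_ic hp hpq).symm, (ib_ne_ic hp hpq).symm]

lemma aeval_gmap_fmap (v : Sig p q ⊕ Fin 2) :
    aeval (R := K) (gmap (K := K) hp hpq) (fmap hp hpq v) = X v := by
  have hG := aeval_G (gmap (K := K) hp hpq) (gmap_inr hp hpq) (gmap_rest hp hpq)
  have hGx := aeval_Gx (gmap (K := K) hp hpq) (gmap_inr hp hpq) (gmap_rest hp hpq)
  have hGy := aeval_Gy (gmap (K := K) hp hpq) (gmap_inr hp hpq) (gmap_rest hp hpq)
  match v with
  | inr j => simp [fmap, aeval_X, gmap]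
  | inl i =>
    by_cases h1 : i = ia hp hpq
    · subst h1
      rw [fmap_a, F']
      simp only [map_add, map_mul, aeval_X, gmap_a, gmap_b, gmap_c, gmap_inr, hG]
      ring
    by_cases h2 : i = ib hp hpq
    · subst h2
      rw [fmap_b, Dx']
      simp only [map_add, aeval_X, gmap_b, hGx]
      ring
    by_cases h3 : i = ic hp hpq
    · subst h3
      rw [fmap_c, Dy']
      simp only [map_add, aeval_X, gmap_c, hGy]
      ring
    · simp [fmap, h1, h2, h3, aeval_X, gmap]

lemma aeval_fmap_gmap (v : Sig p q ⊕ Fin 2) :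
    aeval (R := K) (fmap (K := K) hp hpq) (gmap hp hpq v) = X v := by
  have hG := aeval_G (fmap (K := K) hp hpq) (fmap_inr hp hpq) (fmap_rest hp hpq)
  have hGx := aeval_Gx (fmap (K := K) hp hpq) (fmap_inr hp hpq) (fmap_rest hp hpq)
  have hGy := aeval_Gy (fmap (K := K) hp hpq) (fmap_inr hp hpq) (fmap_rest hp hpq)
  match v with
  | inr j => simp [fmap, aeval_X, gmap]
  | inl i =>
    by_cases h1 : i = ia hp hpq
    · subst h1
      rw [gmap_a]
      simp only [map_sub, map_add, map_mul, aeval_X, fmap_a, fmap_b, fmap_c, fmap_inr,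
        hG, hGx, hGy, F', Dx', Dy']
      ring
    by_cases h2 : i = ib hp hpq
    · subst h2
      rw [gmap_b]
      simp only [map_sub, aeval_X, fmap_b, hGx, Dx']
      ring
    by_cases h3 : i = ic hp hpq
    · subst h3
      rw [gmap_c]
      simp only [map_sub, aeval_X, fmap_c, hGy, Dy']
      ring
    · simp [gmap, h1, h2, h3, aeval_X, fmap]

noncomputable def Phi : P K p q ≃ₐ[K] P K p q :=
  AlgEquiv.ofAlgHom (aeval (fmap hp hpq)) (aeval (gmap hp hpq))
    (by
      apply algHom_ext
      intro v
      simp only [AlgHom.comp_apply, aeval_X, AlgHom.id_apply]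
      exact aeval_fmap_gmap hp hpq v)
    (by
      apply algHom_ext
      intro v
      simp only [AlgHom.comp_apply, aeval_X, AlgHom.id_apply]
      exact aeval_gmap_fmap hp hpq v)

lemma Phi_apply (x : P K p q) : Phi hp hpq x = aeval (fmap hp hpq) x := rfl

end WAux

namespace WAux
variable {K : Type} [Field K] {p q : ℕ} (hp : 1 < p) (hpq : p < q)
open Sum (inl inr)

abbrev TT (p q : ℕ) :=
  {i : ↥(idxSet p q) // (i : ℕ × ℕ) ∉ ({(0,0), (1,0), (0,1)} : Set (ℕ × ℕ))} ⊕ Fin 2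

noncomputable def prj : P K p q →ₐ[K] MvPolynomial (TT p q) K :=
  aeval fun v => match v with
    | inl i => if h : spl i then 0 else X (inl ⟨i, h⟩)
    | inr j => X (inr j)

noncomputable def iot : MvPolynomial (TT p q) K →ₐ[K] P K p q :=
  rename (Sum.map Subtype.val id)

lemma prj_X_spl {i : Sig p q} (h : spl i) : prj (K := K) (X (inl i)) = 0 := by
  simp [prj, h]

lemma prj_X_not_spl {i : Sig p q} (h : ¬ spl i) :
    prj (K := K) (X (inl i)) = X (inl ⟨i, h⟩) := by
  simp [prj, h]

lemma prj_iot (y : MvPolynomial (TT p q) K) : prj (iot y) = y := by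
  have : (prj (K := K) (p := p) (q := q)).comp iot = AlgHom.id K _ := by
    apply algHom_ext
    rintro (⟨i, hi⟩ | j)
    · have h' : ¬ spl (p := p) (q := q) i := hi
      simp only [AlgHom.coe_comp, Function.comp_apply, AlgHom.id_apply, iot, rename_X,
        Sum.map_inl, id_eq]
      rw [prj_X_not_spl h']
    · simp [prj, iot]
  calc prj (iot y) = (prj.comp (iot (K := K) (p := p) (q := q))) y := rfl
    _ = y := by rw [this]; rfl

lemma prj_surjective : Function.Surjective (prj (K := K) (p := p) (q := q)) :=
  fun y => ⟨iot y, prj_iot y⟩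

noncomputable def spanX : Ideal (P K p q) :=
  Ideal.span {X (inl (ia hp hpq)), X (inl (ib hp hpq)), X (inl (ic hp hpq))}

lemma spl_ia : spl (ia (p := p) (q := q) hp hpq) := by simp [spl, ia]
lemma spl_ib : spl (ib (p := p) (q := q) hp hpq) := by simp [spl, ib]
lemma spl_ic : spl (ic (p := p) (q := q) hp hpq) := by simp [spl, ic]

lemma key_sub (x : P K p q) : x - iot (prj x) ∈ spanX hp hpq := by
  induction x using MvPolynomial.induction_on with
  | C a => simp [prj, iot, aeval_C]
  | add f g hf hg =>
      have : f + g - iot (prj (f + g)) = (f - iot (prj f)) + (g - iot (prj g)) := by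
        simp only [map_add]; ring
      rw [this]; exact Ideal.add_mem _ hf hg
  | mul_X f v hf =>
      match v with
      | inr j =>
          have : f * X (inr j) - iot (prj (f * X (inr j)))
              = (f - iot (prj f)) * X (inr j) := by
            simp only [map_mul]
            rw [show prj (K := K) (X (inr j) : P K p q) = X (inr j) from by simp [prj]]
            rw [show iot (K := K) (p := p) (q := q) (X (inr j)) = X (inr j) from by simp [iot]]
            ring
          rw [this]; exact Ideal.mul_mem_right _ _ hf
      | inl i =>
          by_cases h : spl i
          · have h0 : prj (K := K) (f * X (inl i)) = 0 := by
              rw [map_mul, prj_X_spl h, mul_zero]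
            rw [h0, map_zero, sub_zero]
            have hXi : (X (inl i) : P K p q) ∈ spanX hp hpq := by
              rcases (spl_iff hp hpq i).mp h with h' | h' | h' <;>
                (subst h'; apply Ideal.subset_span; simp [spanX])
            exact Ideal.mul_mem_left _ _ hXi
          · have : f * X (inl i) - iot (prj (f * X (inl i)))
                = (f - iot (prj f)) * X (inl i) := by
              rw [map_mul, prj_X_not_spl h, map_mul]
              rw [show iot (K := K) (X (inl ⟨i, h⟩)
                    : MvPolynomial (TT p q) K) = X (inl i) from rename_X _ _]
              ring
            rw [this]; exact Ideal.mul_mem_right _ _ hf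

lemma ker_prj : RingHom.ker (prj (K := K) (p := p) (q := q)) = spanX hp hpq := by
  apply le_antisymm
  · intro x hx
    have hx0 : prj (K := K) x = 0 := hx
    have := key_sub hp hpq x
    rwa [hx0, map_zero, sub_zero] at this
  · rw [spanX, Ideal.span_le]
    rintro y hy
    simp only [spanX, Set.mem_insert_iff, Set.mem_singleton_iff] at hy
    rcases hy with h | h | h <;> subst h <;>
      simp only [SetLike.mem_coe, RingHom.mem_ker] <;>
      first
        | exact prj_X_spl (spl_ia hp hpq)
        | exact prj_X_spl (spl_ib hp hpq)
        | exact prj_X_spl (spl_ic hp hpq)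

noncomputable def equiv3 : (P K p q ⧸ spanX (K := K) hp hpq) ≃ₐ[K] MvPolynomial (TT p q) K :=
  (Ideal.quotientEquivAlgOfEq K (ker_prj hp hpq).symm).trans
    (Ideal.quotientKerAlgEquivOfSurjective (prj_surjective))

end WAux


open WAux in
/-- `A = R[X,Y]/(F, F_X, F_Y)` is, as a `K`-algebra, isomorphic to the polynomial ring over
`K` in the `n − 1` variables `{A_νμ : (ν,μ) ∉ {(0,0),(1,0),(0,1)}} ∪ {X, Y}`; in particular
`A` is an integral domain. -/
theorem A_isomorphic_to_polynomial_ring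
    (K : Type) [Field K] [IsAlgClosed K] [CharZero K]
    (p q : ℕ) (hp : 1 < p) (hpq : p < q) (hco : Nat.Coprime p q) :
    Nonempty
      ((genRing K p q ⧸
          Ideal.span {genF K p q, pderiv 0 (genF K p q), pderiv 1 (genF K p q)}) ≃ₐ[K]
        MvPolynomial
          ({i : ↥(idxSet p q) //
              (i : ℕ × ℕ) ∉ ({(0,0), (1,0), (0,1)} : Set (ℕ × ℕ))} ⊕ Fin 2) K) ∧
    IsDomain (genRing K p q ⧸
        Ideal.span {genF K p q, pderiv 0 (genF K p q), pderiv 1 (genF K p q)}) := by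
  have hJ : Ideal.span {genF K p q, pderiv 0 (genF K p q), pderiv 1 (genF K p q)}
      = (Ideal.span {F' (K := K) hp hpq, Dx' (K := K) hp hpq, Dy' (K := K) hp hpq}).map
          ((eps (K := K) (p := p) (q := q) : P K p q ≃ₐ[K] genRing K p q) :
            P K p q →+* genRing K p q) := by
    rw [Ideal.map_span]
    congr 1
    rw [Set.image_insert_eq, Set.image_insert_eq, Set.image_singleton]
    rw [show ((eps : P K p q ≃ₐ[K] genRing K p q) : P K p q →+* genRing K p q) (F' hp hpq)
        = eps (F' (K:=K) hp hpq) from rfl, eps_F hp hpq]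
    rw [show ((eps : P K p q ≃ₐ[K] genRing K p q) : P K p q →+* genRing K p q) (Dx' hp hpq)
        = eps (Dx' (K:=K) hp hpq) from rfl, eps_Dx hp hpq]
    rw [show ((eps : P K p q ≃ₐ[K] genRing K p q) : P K p q →+* genRing K p q) (Dy' hp hpq)
        = eps (Dy' (K:=K) hp hpq) from rfl, eps_Dy hp hpq]
  have e1 := Ideal.quotientEquivAlg (R₁ := K)
      (Ideal.span {F' (K := K) hp hpq, Dx' (K := K) hp hpq, Dy' (K := K) hp hpq})
      (Ideal.span {genF K p q, pderiv 0 (genF K p q), pderiv 1 (genF K p q)})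
      (eps (K := K)) hJ
  have hPhi : Ideal.span {F' (K := K) hp hpq, Dx' (K := K) hp hpq, Dy' (K := K) hp hpq}
      = (spanX (K := K) hp hpq).map
          ((Phi (K := K) hp hpq : P K p q ≃ₐ[K] P K p q) : P K p q →+* P K p q) := by
    rw [spanX, Ideal.map_span]
    congr 1
    rw [Set.image_insert_eq, Set.image_insert_eq, Set.image_singleton]
    rw [show ((Phi (K := K) hp hpq : P K p q ≃ₐ[K] P K p q) : P K p q →+* P K p q)
          (X (Sum.inl (ia hp hpq))) = Phi hp hpq (X (Sum.inl (ia hp hpq))) from rfl,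
        Phi_apply, aeval_X, fmap_a]
    rw [show ((Phi (K := K) hp hpq : P K p q ≃ₐ[K] P K p q) : P K p q →+* P K p q)
          (X (Sum.inl (ib hp hpq))) = Phi hp hpq (X (Sum.inl (ib hp hpq))) from rfl,
        Phi_apply, aeval_X, fmap_b]
    rw [show ((Phi (K := K) hp hpq : P K p q ≃ₐ[K] P K p q) : P K p q →+* P K p q)
          (X (Sum.inl (ic hp hpq))) = Phi hp hpq (X (Sum.inl (ic hp hpq))) from rfl,
        Phi_apply, aeval_X, fmap_c]
  have e2 := Ideal.quotientEquivAlg (R₁ := K) (spanX (K := K) hp hpq)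
      (Ideal.span {F' (K := K) hp hpq, Dx' (K := K) hp hpq, Dy' (K := K) hp hpq})
      (Phi (K := K) hp hpq) hPhi
  have efinal :
      (genRing K p q ⧸
          Ideal.span {genF K p q, pderiv 0 (genF K p q), pderiv 1 (genF K p q)}) ≃ₐ[K]
        MvPolynomial (TT p q) K :=
    ((e2.trans e1).symm).trans (equiv3 hp hpq)
  refine ⟨⟨efinal⟩, ?_⟩
  exact Function.Injective.isDomain efinal.toAlgHom.toRingHom efinal.injective
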